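/- Let Ω = [0,L₁]×[0,L₂] with periodic boundary conditions, let V₀ be a real vector subspace of smooth Ω-periodic scalar functions, V₁ a real vector subspace of smooth Ω-periodic vector fields, and V₂ a real vector subspace of smooth Ω-periodic scalar functions, with ∇⊥γ ∈ V₁ for all γ ∈ V₀ and ∇·w ∈ V₂ for all w ∈ V₁. Let f be smooth, Ω-periodic and time-independent and g a constant. Suppose u(t) ∈ V₁, h(t) ∈ V₂, F(t) ∈ V₁, q(t) ∈ V₀ depend smoothly on t with u_t ∈ V₁, h_t ∈ V₂, q_t ∈ V₀, and for all t: (i) ∫_Ω γ q h dx = −∫_Ω ∇⊥γ·u dx + ∫_Ω γ f dx for all γ ∈ V₀; (ii) ∫_Ω w·u_t dx + ∫_Ω q w·F⊥ dx − ∫_Ω (∇·w)(gh + ½|u|²) dx = 0 for all w ∈ V₁; (iii) ∫_Ω φ (h_t + ∇·F) dx = 0 for all φ ∈ V₂. Then the enstrophy Z(t) = ∫_Ω q² h dx is conserved: dZ/dt = 0. -/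

import Mathlib

open MeasureTheory

/-- Partial derivative in the `x`-direction of a planar scalar field. -/
noncomputable def pdx (f : ℝ × ℝ → ℝ) (p : ℝ × ℝ) : ℝ :=
  fderiv ℝ f p (1, 0)

/-- Partial derivative in the `y`-direction of a planar scalar field. -/
noncomputable def pdy (f : ℝ × ℝ → ℝ) (p : ℝ × ℝ) : ℝ :=
  fderiv ℝ f p (0, 1)

/-- The divergence `∇·w = ∂w₁/∂x + ∂w₂/∂y` of a planar vector field. -/
noncomputable def div2 (w : ℝ × ℝ → ℝ × ℝ) (p : ℝ × ℝ) : ℝ :=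
  fderiv ℝ (fun q => (w q).1) p (1, 0) + fderiv ℝ (fun q => (w q).2) p (0, 1)

/-- The perpendicular gradient `∇⊥γ = (-γ_y, γ_x)`. -/
noncomputable def perpGrad (γ : ℝ × ℝ → ℝ) : ℝ × ℝ → ℝ × ℝ :=
  fun p => (-(pdy γ p), pdx γ p)

/-- Periodicity with periods `L₁` and `L₂` in the two coordinate directions. -/
def Per2 {α : Type*} (L₁ L₂ : ℝ) (f : ℝ × ℝ → α) : Prop :=
  ∀ p : ℝ × ℝ, f (p.1 + L₁, p.2) = f p ∧ f (p.1, p.2 + L₂) = f p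

section Aux

open Set

/-- slice derivative in t -/
lemma slice_hasDerivAt {G : ℝ × (ℝ × ℝ) → ℝ} (hG : ContDiff ℝ (⊤ : ℕ∞) G) (t : ℝ) (p : ℝ × ℝ) :
    HasDerivAt (fun s => G (s, p)) (fderiv ℝ G (t, p) (1, 0)) t := by
  have h1 : HasDerivAt (fun s : ℝ => (s, p)) ((1 : ℝ), (0 : ℝ × ℝ)) t := by
    simpa using (hasDerivAt_id t).prodMk (hasDerivAt_const t p)
  have h2 : HasFDerivAt G (fderiv ℝ G (t, p)) (t, p) :=
    (hG.differentiable (by simp)).differentiableAt.hasFDerivAt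
  exact h2.comp_hasDerivAt t h1

lemma cont_slice_deriv {G : ℝ × (ℝ × ℝ) → ℝ} (hG : ContDiff ℝ (⊤ : ℕ∞) G) :
    Continuous (fun z : ℝ × (ℝ × ℝ) => fderiv ℝ G z (1, 0)) :=
  ((hG.fderiv_right (m := (⊤ : ℕ∞)) ((by simp))).continuous).clm_apply continuous_const

lemma hasDerivAt_intOmega {s : Set (ℝ × ℝ)} (hs : IsCompact s) (hsm : MeasurableSet s)
    {G : ℝ × (ℝ × ℝ) → ℝ} (hG : ContDiff ℝ (⊤ : ℕ∞) G) (t₀ : ℝ) :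
    HasDerivAt (fun t => ∫ p in s, G (t, p)) (∫ p in s, fderiv ℝ G (t₀, p) (1, 0)) t₀ := by
  have hcomp : IsCompact ((Icc (t₀ - 1) (t₀ + 1)) ×ˢ s) := isCompact_Icc.prod hs
  have hcont : Continuous (fun z : ℝ × (ℝ × ℝ) => fderiv ℝ G z (1, 0)) := cont_slice_deriv hG
  obtain ⟨C, hC⟩ : ∃ C, ∀ z ∈ (Icc (t₀ - 1) (t₀ + 1)) ×ˢ s, ‖fderiv ℝ G z (1, 0)‖ ≤ C := by
    rcases (hcomp.image (hcont.norm)).bddAbove with ⟨C, hC⟩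
    exact ⟨C, fun z hz => hC ⟨z, hz, rfl⟩⟩
  have hfin : volume s < ⊤ := hs.measure_lt_top
  have key := hasDerivAt_integral_of_dominated_loc_of_deriv_le (μ := volume.restrict s)
    (F := fun t p => G (t, p)) (F' := fun t p => fderiv ℝ G (t, p) (1, 0))
    (x₀ := t₀) (bound := fun _ => C) (s := Metric.ball t₀ 1) (Metric.ball_mem_nhds t₀ one_pos)
    (Filter.Eventually.of_forall fun t =>
      ((hG.continuous.comp (Continuous.prodMk_right t)).aestronglyMeasurable))
    (((hG.continuous.comp (Continuous.prodMk_right t₀)).continuousOn).integrableOn_compact hs)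
    ((hcont.comp (Continuous.prodMk_right t₀)).aestronglyMeasurable)
    ?_ (integrableOn_const hfin.ne) ?_
  · exact key.2
  · refine (ae_restrict_iff' hsm).2 (Filter.Eventually.of_forall fun p hp t ht => ?_)
    exact hC (t, p) ⟨by
      simp only [Metric.mem_ball, Real.dist_eq] at ht
      constructor <;> [linarith [abs_le.1 ht.le]; linarith [abs_le.1 ht.le]], hp⟩
  · exact Filter.Eventually.of_forall fun p t _ => slice_hasDerivAt hG t p

lemma hasDerivAt_int_param {s : Set (ℝ × ℝ)} (hs : IsCompact s) (hsm : MeasurableSet s)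
    {G : ℝ × (ℝ × ℝ) → ℝ} (hG : ContDiff ℝ (⊤ : ℕ∞) G) {D : (ℝ × ℝ) → ℝ} {t₀ : ℝ}
    (hD : ∀ p, HasDerivAt (fun t => G (t, p)) (D p) t₀) :
    HasDerivAt (fun t => ∫ p in s, G (t, p)) (∫ p in s, D p) t₀ := by
  have h1 := hasDerivAt_intOmega hs hsm hG t₀
  rw [show (∫ p in s, D p) = ∫ p in s, fderiv ℝ G (t₀, p) (1, 0) from
    integral_congr_ae (Filter.Eventually.of_forall fun p =>
      (hD p).unique (slice_hasDerivAt hG t₀ p))]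
  exact h1

lemma sliceX_hasDerivAt {f : ℝ × ℝ → ℝ} (hf : ContDiff ℝ (⊤ : ℕ∞) f) (x y : ℝ) :
    HasDerivAt (fun x' => f (x', y)) (fderiv ℝ f (x, y) (1, 0)) x := by
  have h1 : HasDerivAt (fun x' : ℝ => (x', y)) ((1 : ℝ), (0 : ℝ)) x := by
    simpa using (hasDerivAt_id x).prodMk (hasDerivAt_const x y)
  exact ((hf.differentiable (by simp)).differentiableAt.hasFDerivAt).comp_hasDerivAt x h1

lemma sliceY_hasDerivAt {f : ℝ × ℝ → ℝ} (hf : ContDiff ℝ (⊤ : ℕ∞) f) (x y : ℝ) :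
    HasDerivAt (fun y' => f (x, y')) (fderiv ℝ f (x, y) (0, 1)) y := by
  have h1 : HasDerivAt (fun y' : ℝ => (x, y')) ((0 : ℝ), (1 : ℝ)) y := by
    simpa using (hasDerivAt_const y x).prodMk (hasDerivAt_id y)
  exact ((hf.differentiable (by simp)).differentiableAt.hasFDerivAt).comp_hasDerivAt y h1

lemma cont_fderiv_apply {f : ℝ × ℝ → ℝ} (hf : ContDiff ℝ (⊤ : ℕ∞) f) (v : ℝ × ℝ) :
    Continuous (fun p => fderiv ℝ f p v) :=
  ((hf.fderiv_right (m := (⊤ : ℕ∞)) (by simp)).continuous).clm_apply continuous_const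

lemma contDiff_fderiv_apply {f : ℝ × ℝ → ℝ} (hf : ContDiff ℝ (⊤ : ℕ∞) f) (v : ℝ × ℝ) :
    ContDiff ℝ (⊤ : ℕ∞) (fun p => fderiv ℝ f p v) :=
  (hf.fderiv_right (m := (⊤ : ℕ∞)) (by simp)).clm_apply contDiff_const

lemma integral_pdx_periodic {L₁ L₂ : ℝ} (hL₁ : 0 < L₁)
    {f : ℝ × ℝ → ℝ} (hf : ContDiff ℝ (⊤ : ℕ∞) f) (hx : ∀ p : ℝ × ℝ, f (p.1 + L₁, p.2) = f p) :
    ∫ p in Icc (0:ℝ) L₁ ×ˢ Icc (0:ℝ) L₂, fderiv ℝ f p (1, 0) = 0 := by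
  have hcont : Continuous (fun p => fderiv ℝ f p (1, 0)) := cont_fderiv_apply hf _
  have hint : IntegrableOn (fun p => fderiv ℝ f p (1, 0))
      (Icc (0:ℝ) L₁ ×ˢ Icc (0:ℝ) L₂) volume :=
    hcont.continuousOn.integrableOn_compact (isCompact_Icc.prod isCompact_Icc)
  rw [Measure.volume_eq_prod] at hint ⊢
  rw [setIntegral_prod _ hint]
  have hswap : Integrable (Function.uncurry fun x y => fderiv ℝ f (x, y) (1, 0))
      ((volume.restrict (Icc (0:ℝ) L₁)).prod (volume.restrict (Icc (0:ℝ) L₂))) := by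
    rw [Measure.prod_restrict]
    exact hint
  rw [show (∫ (x : ℝ) in Icc (0:ℝ) L₁, ∫ (y : ℝ) in Icc (0:ℝ) L₂, fderiv ℝ f (x, y) (1, 0))
      = ∫ (y : ℝ) in Icc (0:ℝ) L₂, ∫ (x : ℝ) in Icc (0:ℝ) L₁, fderiv ℝ f (x, y) (1, 0)
      from integral_integral_swap hswap]
  have hinner : ∀ y : ℝ, (∫ (x : ℝ) in Icc (0:ℝ) L₁, fderiv ℝ f (x, y) (1, 0)) = 0 := by
    intro y
    rw [integral_Icc_eq_integral_Ioc, ← intervalIntegral.integral_of_le hL₁.le]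
    have := intervalIntegral.integral_eq_sub_of_hasDerivAt
      (f := fun x => f (x, y)) (f' := fun x => fderiv ℝ f (x, y) (1, 0))
      (a := 0) (b := L₁) (fun x _ => sliceX_hasDerivAt hf x y)
      ((cont_fderiv_apply hf (1,0)).comp (by continuity) |>.intervalIntegrable 0 L₁)
    rw [this]
    have := hx (0, y)
    simp only [zero_add] at this
    simp [this]
  simp [hinner]

lemma integral_pdy_periodic {L₁ L₂ : ℝ} (hL₂ : 0 < L₂)
    {f : ℝ × ℝ → ℝ} (hf : ContDiff ℝ (⊤ : ℕ∞) f) (hy : ∀ p : ℝ × ℝ, f (p.1, p.2 + L₂) = f p) :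
    ∫ p in Icc (0:ℝ) L₁ ×ˢ Icc (0:ℝ) L₂, fderiv ℝ f p (0, 1) = 0 := by
  have hcont : Continuous (fun p => fderiv ℝ f p (0, 1)) := cont_fderiv_apply hf _
  have hint : IntegrableOn (fun p => fderiv ℝ f p (0, 1))
      (Icc (0:ℝ) L₁ ×ˢ Icc (0:ℝ) L₂) volume :=
    hcont.continuousOn.integrableOn_compact (isCompact_Icc.prod isCompact_Icc)
  rw [Measure.volume_eq_prod] at hint ⊢
  rw [setIntegral_prod _ hint]
  have hinner : ∀ x : ℝ, (∫ (y : ℝ) in Icc (0:ℝ) L₂, fderiv ℝ f (x, y) (0, 1)) = 0 := by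
    intro x
    rw [integral_Icc_eq_integral_Ioc, ← intervalIntegral.integral_of_le hL₂.le]
    have := intervalIntegral.integral_eq_sub_of_hasDerivAt
      (f := fun y => f (x, y)) (f' := fun y => fderiv ℝ f (x, y) (0, 1))
      (a := 0) (b := L₂) (fun y _ => sliceY_hasDerivAt hf x y)
      ((cont_fderiv_apply hf (0,1)).comp (by continuity) |>.intervalIntegrable 0 L₂)
    rw [this]
    have := hy (x, 0)
    simp only [zero_add] at this
    simp [this]
  simp [hinner]

lemma integral_div2_periodic {L₁ L₂ : ℝ} (hL₁ : 0 < L₁) (hL₂ : 0 < L₂)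
    {w : ℝ × ℝ → ℝ × ℝ} (hw : ContDiff ℝ (⊤ : ℕ∞) w) (hper : Per2 L₁ L₂ w) :
    ∫ p in Icc (0:ℝ) L₁ ×ˢ Icc (0:ℝ) L₂, div2 w p = 0 := by
  have hw1 : ContDiff ℝ (⊤ : ℕ∞) (fun p => (w p).1) := contDiff_fst.comp hw
  have hw2 : ContDiff ℝ (⊤ : ℕ∞) (fun p => (w p).2) := contDiff_snd.comp hw
  have hK : IsCompact (Icc (0:ℝ) L₁ ×ˢ Icc (0:ℝ) L₂) := isCompact_Icc.prod isCompact_Icc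
  have h1 : IntegrableOn (fun p => fderiv ℝ (fun q => (w q).1) p (1, 0))
      (Icc (0:ℝ) L₁ ×ˢ Icc (0:ℝ) L₂) volume :=
    (cont_fderiv_apply hw1 _).continuousOn.integrableOn_compact hK
  have h2 : IntegrableOn (fun p => fderiv ℝ (fun q => (w q).2) p (0, 1))
      (Icc (0:ℝ) L₁ ×ˢ Icc (0:ℝ) L₂) volume :=
    (cont_fderiv_apply hw2 _).continuousOn.integrableOn_compact hK
  have hsplit : ∫ p in Icc (0:ℝ) L₁ ×ˢ Icc (0:ℝ) L₂, div2 w p =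
      (∫ p in Icc (0:ℝ) L₁ ×ˢ Icc (0:ℝ) L₂, fderiv ℝ (fun q => (w q).1) p (1, 0)) +
      ∫ p in Icc (0:ℝ) L₁ ×ˢ Icc (0:ℝ) L₂, fderiv ℝ (fun q => (w q).2) p (0, 1) :=
    integral_add h1 h2
  rw [hsplit,
    integral_pdx_periodic hL₁ hw1 (fun p => by rw [show ((w (p.1 + L₁, p.2)).1 : ℝ) = (w p).1 from congrArg Prod.fst (hper p).1]),
    integral_pdy_periodic hL₂ hw2 (fun p => by rw [show ((w (p.1, p.2 + L₂)).2 : ℝ) = (w p).2 from congrArg Prod.snd (hper p).2]),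
    add_zero]

lemma fderiv_mul_apply' {a b : ℝ × ℝ → ℝ} (ha : ContDiff ℝ (⊤ : ℕ∞) a) (hb : ContDiff ℝ (⊤ : ℕ∞) b)
    (p v : ℝ × ℝ) :
    fderiv ℝ (fun q => a q * b q) p v = fderiv ℝ a p v * b p + a p * fderiv ℝ b p v := by
  have h := ((ha.differentiable (by simp)).differentiableAt (x := p)).hasFDerivAt.mul
    ((hb.differentiable (by simp)).differentiableAt (x := p)).hasFDerivAt
  rw [show (fun q => a q * b q) = a * b from rfl, h.fderiv]
  simp [mul_comm]
  ring

lemma fderiv_clm_apply_const {γ : ℝ × ℝ → ℝ} (hγ : ContDiff ℝ (⊤ : ℕ∞) γ) (p v w : ℝ × ℝ) :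
    fderiv ℝ (fun q => fderiv ℝ γ q w) p v = (fderiv ℝ (fderiv ℝ γ) p v) w := by
  have hA : DifferentiableAt ℝ (fderiv ℝ γ) p :=
    ((hγ.fderiv_right (m := (⊤ : ℕ∞)) (by simp)).differentiable (by simp)).differentiableAt
  have h2 : HasFDerivAt (fun q => fderiv ℝ γ q w)
      (((ContinuousLinearMap.apply ℝ ℝ) w).comp (fderiv ℝ (fderiv ℝ γ) p)) p :=
    (ContinuousLinearMap.apply ℝ ℝ w).hasFDerivAt.comp p hA.hasFDerivAt
  rw [h2.fderiv]
  rfl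

lemma second_symm {γ : ℝ × ℝ → ℝ} (hγ : ContDiff ℝ (⊤ : ℕ∞) γ) (p v w : ℝ × ℝ) :
    (fderiv ℝ (fderiv ℝ γ) p v) w = (fderiv ℝ (fderiv ℝ γ) p w) v := by
  have hA : DifferentiableAt ℝ (fderiv ℝ γ) p :=
    ((hγ.fderiv_right (m := (⊤ : ℕ∞)) (by simp)).differentiable (by simp)).differentiableAt
  exact second_derivative_symmetric
    (fun y => ((hγ.differentiable (by simp)).differentiableAt (x := y)).hasFDerivAt)
    hA.hasFDerivAt v w

lemma div2_perpGrad {γ : ℝ × ℝ → ℝ} (hγ : ContDiff ℝ (⊤ : ℕ∞) γ) (p : ℝ × ℝ) :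
    div2 (perpGrad γ) p = 0 := by
  have hneg : fderiv ℝ (fun q => -(pdy γ q)) p (1, 0)
      = -(fderiv ℝ (fun q => pdy γ q) p (1, 0)) := by
    rw [fderiv_fun_neg]; rfl
  have : div2 (perpGrad γ) p =
      fderiv ℝ (fun q => -(pdy γ q)) p (1, 0) + fderiv ℝ (fun q => pdx γ q) p (0, 1) := rfl
  rw [this, hneg]
  unfold pdx pdy
  rw [fderiv_clm_apply_const hγ, fderiv_clm_apply_const hγ, second_symm hγ p (1,0) (0,1)]
  ring

end Aux

/-- enstrophy conservation for the compatible finite element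
discretisation of the nonlinear shallow water equations.  With `∇⊥V₀ ⊆ V₁`,
`∇·V₁ ⊆ V₂`, `u(t), F(t), u_t(t) ∈ V₁`, `h(t), h_t(t) ∈ V₂`, `q(t), q_t(t) ∈ V₀`,
and for all `t`: (i) the discrete potential vorticity relation
`∫_Ω γ q h = -∫_Ω ∇⊥γ·u + ∫_Ω γ f` for all `γ ∈ V₀`; (ii) the discrete momentum
equation `∫_Ω w·u_t + ∫_Ω q w·F⊥ - ∫_Ω (∇·w)(gh + ½|u|²) = 0` for all `w ∈ V₁`;
(iii) the discrete continuity equation `∫_Ω φ (h_t + ∇·F) = 0` for all `φ ∈ V₂`;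
the enstrophy `Z(t) = ∫_Ω q² h dx` is conserved: `dZ/dt = 0`. -/
theorem discrete_enstrophy_conservation
    (L₁ L₂ : ℝ) (hL₁ : 0 < L₁) (hL₂ : 0 < L₂)
    (Ω : Set (ℝ × ℝ)) (hΩ : Ω = Set.Icc (0 : ℝ) L₁ ×ˢ Set.Icc (0 : ℝ) L₂)
    (V₀ : Submodule ℝ ((ℝ × ℝ) → ℝ))
    (V₁ : Submodule ℝ ((ℝ × ℝ) → ℝ × ℝ)) (V₂ : Submodule ℝ ((ℝ × ℝ) → ℝ))
    (hV₀ : ∀ γ ∈ V₀, ContDiff ℝ (⊤ : ℕ∞) γ ∧ Per2 L₁ L₂ γ)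
    (hV₁ : ∀ w ∈ V₁, ContDiff ℝ (⊤ : ℕ∞) w ∧ Per2 L₁ L₂ w)
    (hV₂ : ∀ φ ∈ V₂, ContDiff ℝ (⊤ : ℕ∞) φ ∧ Per2 L₁ L₂ φ)
    (hgradperp : ∀ γ ∈ V₀, perpGrad γ ∈ V₁)
    (hdiv : ∀ w ∈ V₁, div2 w ∈ V₂)
    (f : ℝ × ℝ → ℝ) (hf : ContDiff ℝ (⊤ : ℕ∞) f) (hfper : Per2 L₁ L₂ f)
    (g : ℝ)
    (u F : ℝ → ℝ × ℝ → ℝ × ℝ) (h q : ℝ → ℝ × ℝ → ℝ)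
    (hus : ContDiff ℝ (⊤ : ℕ∞) (fun z : ℝ × (ℝ × ℝ) => u z.1 z.2))
    (hFs : ContDiff ℝ (⊤ : ℕ∞) (fun z : ℝ × (ℝ × ℝ) => F z.1 z.2))
    (hhs : ContDiff ℝ (⊤ : ℕ∞) (fun z : ℝ × (ℝ × ℝ) => h z.1 z.2))
    (hqs : ContDiff ℝ (⊤ : ℕ∞) (fun z : ℝ × (ℝ × ℝ) => q z.1 z.2))
    (huV : ∀ t, u t ∈ V₁) (hFV : ∀ t, F t ∈ V₁)
    (hhV : ∀ t, h t ∈ V₂) (hqV : ∀ t, q t ∈ V₀)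
    (hutV : ∀ t, (fun p => deriv (fun s => u s p) t) ∈ V₁)
    (hhtV : ∀ t, (fun p => deriv (fun s => h s p) t) ∈ V₂)
    (hqtV : ∀ t, (fun p => deriv (fun s => q s p) t) ∈ V₀)
    (hpv : ∀ t : ℝ, ∀ γ ∈ V₀,
      ∫ p in Ω, γ p * (q t p * h t p) =
        -(∫ p in Ω, ((-(pdy γ p)) * (u t p).1 + pdx γ p * (u t p).2)) +
          ∫ p in Ω, γ p * f p)
    (hmom : ∀ t : ℝ, ∀ w ∈ V₁,
      (∫ p in Ω, ((w p).1 * (deriv (fun s => (u s p).1) t) +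
          (w p).2 * (deriv (fun s => (u s p).2) t))) +
        (∫ p in Ω, q t p * ((w p).1 * (-(F t p).2) + (w p).2 * (F t p).1)) -
        (∫ p in Ω, div2 w p *
          (g * h t p + ((u t p).1 ^ 2 + (u t p).2 ^ 2) / 2)) = 0)
    (hcont : ∀ t : ℝ, ∀ φ ∈ V₂,
      ∫ p in Ω, φ p * (deriv (fun s => h s p) t + div2 (F t) p) = 0) :
    ∀ t : ℝ, deriv (fun s => ∫ p in Ω, (q s p) ^ 2 * h s p) t = 0 := by
  intro t₀
  subst hΩ
  set K : Set (ℝ × ℝ) := Set.Icc (0 : ℝ) L₁ ×ˢ Set.Icc (0 : ℝ) L₂ with hKdef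
  have hK : IsCompact K := isCompact_Icc.prod isCompact_Icc
  have hKm : MeasurableSet K := measurableSet_Icc.prod measurableSet_Icc
  -- smoothness of time slices
  have ca : ContDiff ℝ (⊤ : ℕ∞) (q t₀) := (hV₀ _ (hqV t₀)).1
  have cb : ContDiff ℝ (⊤ : ℕ∞) (h t₀) := (hV₂ _ (hhV t₀)).1
  have cF : ContDiff ℝ (⊤ : ℕ∞) (F t₀) := (hV₁ _ (hFV t₀)).1
  have ca' : ContDiff ℝ (⊤ : ℕ∞) (fun p => deriv (fun s => q s p) t₀) := (hV₀ _ (hqtV t₀)).1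
  have cb' : ContDiff ℝ (⊤ : ℕ∞) (fun p => deriv (fun s => h s p) t₀) := (hV₂ _ (hhtV t₀)).1
  have cdF : ContDiff ℝ (⊤ : ℕ∞) (div2 (F t₀)) := (hV₂ _ (hdiv _ (hFV t₀))).1
  have cF1 : ContDiff ℝ (⊤ : ℕ∞) (fun p => (F t₀ p).1) := contDiff_fst.comp cF
  have cF2 : ContDiff ℝ (⊤ : ℕ∞) (fun p => (F t₀ p).2) := contDiff_snd.comp cF
  have cpdx : ContDiff ℝ (⊤ : ℕ∞) (pdx (q t₀)) := contDiff_fderiv_apply ca (1, 0)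
  have cpdy : ContDiff ℝ (⊤ : ℕ∞) (pdy (q t₀)) := contDiff_fderiv_apply ca (0, 1)
  have hus1 : ContDiff ℝ (⊤ : ℕ∞) (fun z : ℝ × (ℝ × ℝ) => (u z.1 z.2).1) := contDiff_fst.comp hus
  have hus2 : ContDiff ℝ (⊤ : ℕ∞) (fun z : ℝ × (ℝ × ℝ) => (u z.1 z.2).2) := contDiff_snd.comp hus
  -- time-slice derivatives
  have sq : ∀ p, HasDerivAt (fun t => q t p) (deriv (fun s => q s p) t₀) t₀ := fun p =>
    (slice_hasDerivAt hqs t₀ p).differentiableAt.hasDerivAt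
  have sh : ∀ p, HasDerivAt (fun t => h t p) (deriv (fun s => h s p) t₀) t₀ := fun p =>
    (slice_hasDerivAt hhs t₀ p).differentiableAt.hasDerivAt
  have su1 : ∀ p, HasDerivAt (fun t => (u t p).1) (deriv (fun s => (u s p).1) t₀) t₀ := fun p =>
    (slice_hasDerivAt hus1 t₀ p).differentiableAt.hasDerivAt
  have su2 : ∀ p, HasDerivAt (fun t => (u t p).2) (deriv (fun s => (u s p).2) t₀) t₀ := fun p =>
    (slice_hasDerivAt hus2 t₀ p).differentiableAt.hasDerivAt
  -- integrability helper
  have hIn : ∀ {φ : ℝ × ℝ → ℝ}, Continuous φ → IntegrableOn φ K volume := fun hφ =>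
    hφ.continuousOn.integrableOn_compact hK
  -- Step A : derivative of the potential vorticity relation with test function γ = q t₀
  have hGΦ : ContDiff ℝ (⊤ : ℕ∞) (fun z : ℝ × (ℝ × ℝ) => q t₀ z.2 * (q z.1 z.2 * h z.1 z.2)) :=
    (ca.comp contDiff_snd).mul (hqs.mul hhs)
  have hΦ : HasDerivAt (fun t => ∫ p in K, q t₀ p * (q t p * h t p))
      (∫ p in K, q t₀ p * (deriv (fun s => q s p) t₀ * h t₀ p +
        q t₀ p * deriv (fun s => h s p) t₀)) t₀ :=
    hasDerivAt_int_param hK hKm hGΦ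
      (fun p => by simpa using ((sq p).mul (sh p)).const_mul (q t₀ p))
  have hGΨ : ContDiff ℝ (⊤ : ℕ∞) (fun z : ℝ × (ℝ × ℝ) =>
      (-(pdy (q t₀) z.2)) * (u z.1 z.2).1 + pdx (q t₀) z.2 * (u z.1 z.2).2) :=
    (((cpdy.comp contDiff_snd).neg).mul hus1).add ((cpdx.comp contDiff_snd).mul hus2)
  have hΨ : HasDerivAt (fun t => ∫ p in K,
        ((-(pdy (q t₀) p)) * (u t p).1 + pdx (q t₀) p * (u t p).2))
      (∫ p in K, ((-(pdy (q t₀) p)) * deriv (fun s => (u s p).1) t₀ +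
        pdx (q t₀) p * deriv (fun s => (u s p).2) t₀)) t₀ :=
    hasDerivAt_int_param hK hKm hGΨ
      (fun p => by simpa using ((su1 p).const_mul (-(pdy (q t₀) p))).fun_add ((su2 p).const_mul (pdx (q t₀) p)))
  have heq : (fun t => ∫ p in K, q t₀ p * (q t p * h t p)) =
      (fun t => -(∫ p in K, ((-(pdy (q t₀) p)) * (u t p).1 + pdx (q t₀) p * (u t p).2)) +
        ∫ p in K, q t₀ p * f p) := funext fun t => hpv t (q t₀) (hqV t₀)
  have hAB : (∫ p in K, q t₀ p * (deriv (fun s => q s p) t₀ * h t₀ p +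
        q t₀ p * deriv (fun s => h s p) t₀)) =
      -(∫ p in K, ((-(pdy (q t₀) p)) * deriv (fun s => (u s p).1) t₀ +
        pdx (q t₀) p * deriv (fun s => (u s p).2) t₀)) := by
    refine hΦ.unique ?_
    rw [heq]
    exact (hΨ.neg).add_const _
  -- Step B : momentum equation with w = perpGrad (q t₀)
  have hB := hmom t₀ (perpGrad (q t₀)) (hgradperp _ (hqV t₀))
  simp only [div2_perpGrad ca, zero_mul, integral_zero, sub_zero, perpGrad] at hB
  -- key identity (*)
  have key1 : (∫ p in K, q t₀ p * (deriv (fun s => q s p) t₀ * h t₀ p +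
        q t₀ p * deriv (fun s => h s p) t₀)) =
      ∫ p in K, q t₀ p * ((-(pdy (q t₀) p)) * (-(F t₀ p).2) + pdx (q t₀) p * (F t₀ p).1) := by
    rw [hAB]
    linarith [hB]
  -- Step C : derivative of the enstrophy
  have hGZ : ContDiff ℝ (⊤ : ℕ∞) (fun z : ℝ × (ℝ × ℝ) => q z.1 z.2 ^ 2 * h z.1 z.2) :=
    (hqs.pow 2).mul hhs
  have hDZ : ∀ p, HasDerivAt (fun t => q t p ^ 2 * h t p)
      ((deriv (fun s => q s p) t₀ * q t₀ p + q t₀ p * deriv (fun s => q s p) t₀) * h t₀ p +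
        q t₀ p * q t₀ p * deriv (fun s => h s p) t₀) t₀ := by
    intro p
    have base := ((sq p).mul (sq p)).mul (sh p)
    have hfun : (fun t => q t p ^ 2 * h t p) = fun t => q t p * q t p * h t p := by
      funext t; ring
    rw [hfun]
    exact base
  have hZ : HasDerivAt (fun t => ∫ p in K, q t p ^ 2 * h t p)
      (∫ p in K, ((deriv (fun s => q s p) t₀ * q t₀ p +
        q t₀ p * deriv (fun s => q s p) t₀) * h t₀ p +
        q t₀ p * q t₀ p * deriv (fun s => h s p) t₀)) t₀ :=
    hasDerivAt_int_param hK hKm hGZ (fun p => by simpa using hDZ p)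
  rw [hZ.deriv]
  -- Step D : a.e. vanishing of h_t + div F
  have hφmem : ((fun p => deriv (fun s => h s p) t₀) + div2 (F t₀)) ∈ V₂ :=
    V₂.add_mem (hhtV t₀) (hdiv _ (hFV t₀))
  have hzero := hcont t₀ _ hφmem
  simp only [Pi.add_apply] at hzero
  have hsqz : ∀ᵐ p ∂(volume.restrict K),
      deriv (fun s => h s p) t₀ + div2 (F t₀) p = 0 := by
    have hnn : (0 : (ℝ × ℝ) → ℝ) ≤ fun p =>
        (deriv (fun s => h s p) t₀ + div2 (F t₀) p) *
        (deriv (fun s => h s p) t₀ + div2 (F t₀) p) := fun p => mul_self_nonneg _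
    have hint : Integrable (fun p =>
        (deriv (fun s => h s p) t₀ + div2 (F t₀) p) *
        (deriv (fun s => h s p) t₀ + div2 (F t₀) p)) (volume.restrict K) :=
      hIn (((cb'.continuous).add (cdF.continuous)).mul
        ((cb'.continuous).add (cdF.continuous)))
    have := (integral_eq_zero_iff_of_nonneg hnn hint).1 hzero
    filter_upwards [this] with p hp
    exact mul_self_eq_zero.1 hp
  have hae0 : (∫ p in K, q t₀ p * q t₀ p *
      (deriv (fun s => h s p) t₀ + div2 (F t₀) p)) = 0 := by
    refine integral_eq_zero_of_ae ?_
    filter_upwards [hsqz] with p hp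
    simp [hp]
  -- integrability of the various pieces
  have i1 : IntegrableOn (fun p => q t₀ p * (deriv (fun s => q s p) t₀ * h t₀ p +
      q t₀ p * deriv (fun s => h s p) t₀)) K volume :=
    hIn (ca.continuous.mul (((ca'.continuous).mul cb.continuous).add
      (ca.continuous.mul cb'.continuous)))
  have i2 : IntegrableOn (fun p => q t₀ p * q t₀ p * deriv (fun s => h s p) t₀) K volume :=
    hIn ((ca.continuous.mul ca.continuous).mul cb'.continuous)
  have i3 : IntegrableOn (fun p => q t₀ p * q t₀ p * div2 (F t₀) p) K volume :=
    hIn ((ca.continuous.mul ca.continuous).mul cdF.continuous)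
  have i4 : IntegrableOn (fun p => q t₀ p *
      ((-(pdy (q t₀) p)) * (-(F t₀ p).2) + pdx (q t₀) p * (F t₀ p).1)) K volume :=
    hIn (ca.continuous.mul ((((cpdy.continuous).neg).mul (cF2.continuous).neg).add
      ((cpdx.continuous).mul cF1.continuous)))
  -- split ∫ q² (h_t + div F) = ∫ q² h_t + ∫ q² div F
  have split2 : (∫ p in K, q t₀ p * q t₀ p * deriv (fun s => h s p) t₀) =
      -(∫ p in K, q t₀ p * q t₀ p * div2 (F t₀) p) := by
    have hsum : (∫ p in K, (q t₀ p * q t₀ p * deriv (fun s => h s p) t₀ +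
        q t₀ p * q t₀ p * div2 (F t₀) p)) = 0 := by
      rw [show (fun p => q t₀ p * q t₀ p * deriv (fun s => h s p) t₀ +
          q t₀ p * q t₀ p * div2 (F t₀) p) = fun p => q t₀ p * q t₀ p *
          (deriv (fun s => h s p) t₀ + div2 (F t₀) p) from funext fun p => by ring]
      exact hae0
    rw [integral_add i2 i3] at hsum
    linarith
  -- rewrite the enstrophy derivative
  have splitZ : (∫ p in K, ((deriv (fun s => q s p) t₀ * q t₀ p +
      q t₀ p * deriv (fun s => q s p) t₀) * h t₀ p +
      q t₀ p * q t₀ p * deriv (fun s => h s p) t₀)) =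
      2 * (∫ p in K, q t₀ p * (deriv (fun s => q s p) t₀ * h t₀ p +
        q t₀ p * deriv (fun s => h s p) t₀)) -
      ∫ p in K, q t₀ p * q t₀ p * deriv (fun s => h s p) t₀ := by
    have : (fun p => (deriv (fun s => q s p) t₀ * q t₀ p +
        q t₀ p * deriv (fun s => q s p) t₀) * h t₀ p +
        q t₀ p * q t₀ p * deriv (fun s => h s p) t₀) =
        fun p => 2 * (q t₀ p * (deriv (fun s => q s p) t₀ * h t₀ p +
          q t₀ p * deriv (fun s => h s p) t₀)) -
          q t₀ p * q t₀ p * deriv (fun s => h s p) t₀ := funext fun p => by ring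
    rw [this, integral_sub ((i1.const_mul 2)) i2, integral_const_mul]
  -- the flux vector field
  set G : ℝ × ℝ → ℝ × ℝ := fun p =>
    (q t₀ p * q t₀ p * (F t₀ p).1, q t₀ p * q t₀ p * (F t₀ p).2) with hGdef
  have cG : ContDiff ℝ (⊤ : ℕ∞) G := ((ca.mul ca).mul cF1).prodMk ((ca.mul ca).mul cF2)
  have hGper : Per2 L₁ L₂ G := by
    intro p
    have h1 := ((hV₀ _ (hqV t₀)).2 p).1
    have h2 := ((hV₀ _ (hqV t₀)).2 p).2
    have h3 := ((hV₁ _ (hFV t₀)).2 p).1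
    have h4 := ((hV₁ _ (hFV t₀)).2 p).2
    constructor <;> simp [hGdef, h1, h2, h3, h4]
  have hdivG : ∀ p, div2 G p =
      2 * (q t₀ p * ((-(pdy (q t₀) p)) * (-(F t₀ p).2) + pdx (q t₀) p * (F t₀ p).1)) +
      q t₀ p * q t₀ p * div2 (F t₀) p := by
    intro p
    have e1 : div2 G p = fderiv ℝ (fun p' => q t₀ p' * q t₀ p' * (F t₀ p').1) p (1, 0) +
        fderiv ℝ (fun p' => q t₀ p' * q t₀ p' * (F t₀ p').2) p (0, 1) := rfl
    have e2 : div2 (F t₀) p = fderiv ℝ (fun p' => (F t₀ p').1) p (1, 0) +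
        fderiv ℝ (fun p' => (F t₀ p').2) p (0, 1) := rfl
    rw [e1,
      fderiv_mul_apply' (ca.mul ca) cF1,
      fderiv_mul_apply' (ca.mul ca) cF2,
      fderiv_mul_apply' ca ca p ((1:ℝ),(0:ℝ)), fderiv_mul_apply' ca ca p ((0:ℝ),(1:ℝ)), e2]
    unfold pdx pdy
    ring
  have hzeroG : (∫ p in K, div2 G p) = 0 := integral_div2_periodic hL₁ hL₂ cG hGper
  have hGsplit : (∫ p in K, div2 G p) =
      2 * (∫ p in K, q t₀ p * ((-(pdy (q t₀) p)) * (-(F t₀ p).2) +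
        pdx (q t₀) p * (F t₀ p).1)) +
      ∫ p in K, q t₀ p * q t₀ p * div2 (F t₀) p := by
    rw [show (fun p => div2 G p) = fun p =>
        2 * (q t₀ p * ((-(pdy (q t₀) p)) * (-(F t₀ p).2) + pdx (q t₀) p * (F t₀ p).1)) +
        q t₀ p * q t₀ p * div2 (F t₀) p from funext hdivG]
    rw [integral_add (i4.const_mul 2) i3, integral_const_mul]
  rw [splitZ, key1, split2]
  linarith [hzeroG, hGsplit]
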